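/- arXiv:1711.08146 — 6 statements merged into one kernel-verified Lean document; each statement's English description precedes it below -/
import Mathlib

section
/- Let F0, F1, F2, F3 : ℝ^4 → ℝ (coordinates (t, y, p, q)) be C^1, and let μ : ℝ^4 → ℝ be C^1 and nonvanishing. Suppose the six compatibility equations hold: ∂(μF_i)/∂t = ∂(μF_0)/∂x_{i-1} for i = 1,2,3 and ∂(μF_i)/∂x_{j-1} = ∂(μF_j)/∂x_{i-1} for (i,j) ∈ {(2,1),(3,1),(3,2)}, where (x_0,x_1,x_2) = (y,p,q). Then there exists a C^1 function Ψ on ℝ^4 with ∂Ψ/∂t = μF_0, ∂Ψ/∂y = μF_1, ∂Ψ/∂p = μF_2, ∂Ψ/∂q = μF_3, and every thrice-differentiable solution y of F3 y''' + F2 y'' + F1 y' + F0 = 0 satisfies Ψ(t, y, y', y'') = constant on any interval. -/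
/-- Partial derivative of `f : ℝ^m → ℝ` in the `i`-th coordinate direction. -/
noncomputable def pd {m : ℕ} (i : Fin m) (f : (Fin m → ℝ) → ℝ) (x : Fin m → ℝ) : ℝ :=
  fderiv ℝ f x (Pi.single i 1)



set_option maxHeartbeats 1000000

open MeasureTheory Set Metric

lemma clm_eval {n : ℕ} (T : (Fin n → ℝ) →L[ℝ] ℝ) (v : Fin n → ℝ) :
    T v = ∑ j, v j * T (Pi.single j 1) := by
  have hv : v = ∑ j, v j • (Pi.single j 1 : Fin n → ℝ) := by
    funext k
    simp [Finset.sum_apply, Pi.single_apply]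
  conv_lhs => rw [hv]
  rw [map_sum]
  simp [smul_eq_mul]

lemma poincare {n : ℕ} (G : Fin n → (Fin n → ℝ) → ℝ) (hG : ∀ i, ContDiff ℝ 1 (G i))
    (hsym : ∀ i j x, fderiv ℝ (G i) x (Pi.single j 1) = fderiv ℝ (G j) x (Pi.single i 1)) :
    ∃ Ψ : (Fin n → ℝ) → ℝ, ContDiff ℝ 1 Ψ ∧
      ∀ x, HasFDerivAt Ψ (∑ j, G j x • (ContinuousLinearMap.proj j : (Fin n → ℝ) →L[ℝ] ℝ)) x := by
  classical
  have hGd : ∀ i z, HasFDerivAt (G i) (fderiv ℝ (G i) z) z :=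
    fun i z => ((hG i).differentiable one_ne_zero z).hasFDerivAt
  have hGc : ∀ i, Continuous (G i) := fun i => (hG i).continuous
  have hDc : ∀ i, Continuous (fderiv ℝ (G i)) := fun i => (hG i).continuous_fderiv one_ne_zero
  set F' : (Fin n → ℝ) → ℝ → ((Fin n → ℝ) →L[ℝ] ℝ) := fun x s =>
    ∑ i, (G i (s • x) • ContinuousLinearMap.proj i
      + (x i * s) • fderiv ℝ (G i) (s • x)) with hF'def
  set Ψ : (Fin n → ℝ) → ℝ := fun x => ∫ s in (0:ℝ)..1, ∑ i, G i (s • x) * x i with hΨdef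
  -- derivative of the integrand in x
  have keyF : ∀ (x : Fin n → ℝ) (s : ℝ),
      HasFDerivAt (fun y => ∑ i, G i (s • y) * y i) (F' x s) x := by
    intro x s
    apply HasFDerivAt.fun_sum
    intro i _
    have hsm : HasFDerivAt (fun y : Fin n → ℝ => s • y)
        (s • ContinuousLinearMap.id ℝ (Fin n → ℝ)) x := (hasFDerivAt_id x).const_smul s
    have hcomp : HasFDerivAt (fun y => G i (s • y)) (s • fderiv ℝ (G i) (s • x)) x := by
      have h := (hGd i (s • x)).comp x hsm
      refine h.congr_fderiv ?_
      ext v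
      simp
    have hproj : HasFDerivAt (fun y : Fin n → ℝ => y i)
        (ContinuousLinearMap.proj i : (Fin n → ℝ) →L[ℝ] ℝ) x :=
      (ContinuousLinearMap.proj i : (Fin n → ℝ) →L[ℝ] ℝ).hasFDerivAt
    have hmul := hcomp.mul hproj
    rw [smul_smul] at hmul
    exact hmul
  -- continuity of everything in (s,x) jointly
  have hφ : Continuous fun p : ℝ × (Fin n → ℝ) => F' p.2 p.1 := by
    apply continuous_finset_sum
    intro i _
    apply Continuous.add
    · exact ((hGc i).comp (continuous_fst.smul continuous_snd)).smul continuous_const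
    · exact (((continuous_apply i).comp continuous_snd).mul continuous_fst).smul
        ((hDc i).comp (continuous_fst.smul continuous_snd))
  have hFc : Continuous fun p : ℝ × (Fin n → ℝ) => ∑ i, G i (p.1 • p.2) * p.2 i := by
    apply continuous_finset_sum
    intro i _
    exact ((hGc i).comp (continuous_fst.smul continuous_snd)).mul
      ((continuous_apply i).comp continuous_snd)
  have hL : ∀ x₀, HasFDerivAt Ψ (∑ j, G j x₀ • (ContinuousLinearMap.proj j : (Fin n → ℝ) →L[ℝ] ℝ)) x₀ := by
    intro x₀
    obtain ⟨C, hC⟩ := ((isCompact_Icc (a := (0:ℝ)) (b := 1)).prod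
      (isCompact_closedBall x₀ 1)).exists_bound_of_continuousOn hφ.continuousOn
    have hF'cont : ∀ x, Continuous fun s => F' x s := by
      intro x
      exact hφ.comp (continuous_id.prodMk continuous_const)
    have step : HasFDerivAt Ψ (∫ s in (0:ℝ)..1, F' x₀ s) x₀ := by
      apply intervalIntegral.hasFDerivAt_integral_of_dominated_of_fderiv_le
        (s := ball x₀ 1) (bound := fun _ => C) (ball_mem_nhds x₀ one_pos)
      · exact Filter.Eventually.of_forall fun x =>
          (hFc.comp (continuous_id.prodMk continuous_const)).aestronglyMeasurable
      · exact (hFc.comp (continuous_id.prodMk continuous_const)).intervalIntegrable _ _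
      · exact (hF'cont x₀).aestronglyMeasurable
      · refine Filter.Eventually.of_forall fun t ht x hx => ?_
        rw [uIoc_of_le (by norm_num : (0:ℝ) ≤ 1)] at ht
        exact hC (t, x) ⟨⟨ht.1.le, ht.2⟩, ball_subset_closedBall hx⟩
      · exact intervalIntegrable_const
      · exact Filter.Eventually.of_forall fun t ht x hx => keyF x t
    have hFTC : ∀ j, (∫ s in (0:ℝ)..1,
        (G j (s • x₀) + s * fderiv ℝ (G j) (s • x₀) x₀)) = G j x₀ := by
      intro j
      have hd : ∀ s ∈ uIcc (0:ℝ) 1, HasDerivAt (fun s : ℝ => s * G j (s • x₀))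
          (G j (s • x₀) + s * fderiv ℝ (G j) (s • x₀) x₀) s := by
        intro s _
        have h1 : HasDerivAt (fun s : ℝ => s • x₀) x₀ s := by
          simpa using (hasDerivAt_id s).smul_const x₀
        have h2 : HasDerivAt (fun s : ℝ => G j (s • x₀))
            (fderiv ℝ (G j) (s • x₀) x₀) s := (hGd j (s • x₀)).comp_hasDerivAt s h1
        simpa using (hasDerivAt_id' s).fun_mul h2
      have hInt : IntervalIntegrable
          (fun s : ℝ => G j (s • x₀) + s * fderiv ℝ (G j) (s • x₀) x₀) volume 0 1 := by
        apply Continuous.intervalIntegrable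
        apply Continuous.add
        · exact (hGc j).comp (continuous_id.smul continuous_const)
        · exact continuous_id.mul
            ((ContinuousLinearMap.apply ℝ ℝ x₀).continuous.comp
              ((hDc j).comp (continuous_id.smul continuous_const)))
      have := intervalIntegral.integral_eq_sub_of_hasDerivAt hd hInt
      simpa using this
    have hIE : (∫ s in (0:ℝ)..1, F' x₀ s) = ∑ j, G j x₀ • (ContinuousLinearMap.proj j : (Fin n → ℝ) →L[ℝ] ℝ) := by
      have hφint : IntervalIntegrable (F' x₀) volume 0 1 :=
        (hF'cont x₀).intervalIntegrable _ _
      ext v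
      rw [ContinuousLinearMap.intervalIntegral_apply hφint v]
      have hpt : ∀ s : ℝ, F' x₀ s v
          = ∑ j, v j * (G j (s • x₀) + s * fderiv ℝ (G j) (s • x₀) x₀) := by
        intro s
        simp only [hF'def, ContinuousLinearMap.sum_apply, ContinuousLinearMap.add_apply,
          ContinuousLinearMap.smul_apply, ContinuousLinearMap.proj_apply, smul_eq_mul]
        rw [Finset.sum_add_distrib]
        have h2 : (∑ i, (x₀ i * s) * fderiv ℝ (G i) (s • x₀) v)
            = ∑ j, v j * (s * fderiv ℝ (G j) (s • x₀) x₀) := by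
          calc (∑ i, (x₀ i * s) * fderiv ℝ (G i) (s • x₀) v)
              = ∑ i, ∑ j, (x₀ i * s) * (v j * fderiv ℝ (G j) (s • x₀) (Pi.single i 1)) := by
                refine Finset.sum_congr rfl fun i _ => ?_
                rw [clm_eval (fderiv ℝ (G i) (s • x₀)) v, Finset.mul_sum]
                refine Finset.sum_congr rfl fun j _ => ?_
                rw [hsym i j]
            _ = ∑ j, v j * (s * fderiv ℝ (G j) (s • x₀) x₀) := by
                rw [Finset.sum_comm]
                refine Finset.sum_congr rfl fun j _ => ?_
                rw [clm_eval (fderiv ℝ (G j) (s • x₀)) x₀, Finset.mul_sum, Finset.mul_sum]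
                refine Finset.sum_congr rfl fun i _ => ?_
                ring
        rw [h2]
        simp_rw [mul_add]
        rw [Finset.sum_add_distrib]
        congr 1
        exact Finset.sum_congr rfl fun i _ => mul_comm _ _
      simp_rw [hpt]
      rw [intervalIntegral.integral_finset_sum]
      · simp_rw [intervalIntegral.integral_const_mul, hFTC]
        simp only [ContinuousLinearMap.sum_apply, ContinuousLinearMap.smul_apply,
          ContinuousLinearMap.proj_apply, smul_eq_mul]
        exact Finset.sum_congr rfl fun j _ => mul_comm _ _
      · intro j _
        apply Continuous.intervalIntegrable
        apply Continuous.mul continuous_const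
        apply Continuous.add
        · exact (hGc j).comp (continuous_id.smul continuous_const)
        · exact continuous_id.mul
            ((ContinuousLinearMap.apply ℝ ℝ x₀).continuous.comp
              ((hDc j).comp (continuous_id.smul continuous_const)))
    rw [hIE] at step
    exact step
  refine ⟨Ψ, ?_, hL⟩
  rw [contDiff_one_iff_fderiv]
  refine ⟨fun x => (hL x).differentiableAt, ?_⟩
  have : fderiv ℝ Ψ = fun x => ∑ j, G j x • (ContinuousLinearMap.proj j : (Fin n → ℝ) →L[ℝ] ℝ) :=
    funext fun x => (hL x).fderiv
  rw [this]
  exact continuous_finset_sum _ fun j _ => (hGc j).smul continuous_const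

/-- If `μ` is a nonvanishing `C¹` integrating factor for the third order equation
`F3 y''' + F2 y'' + F1 y' + F0 = 0` (i.e. the six compatibility conditions hold
for `(μF0, μF1, μF2, μF3)` on `ℝ⁴`, coordinates `(t,y,p,q)`), then there is a `C¹`
first integral `Ψ` with `∇Ψ = μ·(F0,F1,F2,F3)`, and `Ψ(t, y, y', y'')` is constant
along any thrice differentiable solution on any interval. -/
theorem integrating_factor_third_order
    (F0 F1 F2 F3 μ : (Fin 4 → ℝ) → ℝ)
    (hF0 : ContDiff ℝ 1 F0) (hF1 : ContDiff ℝ 1 F1) (hF2 : ContDiff ℝ 1 F2)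
    (hF3 : ContDiff ℝ 1 F3) (hμ : ContDiff ℝ 1 μ) (hμ0 : ∀ x, μ x ≠ 0)
    (h1 : ∀ x, pd 0 (fun x => μ x * F1 x) x = pd 1 (fun x => μ x * F0 x) x)
    (h2 : ∀ x, pd 0 (fun x => μ x * F2 x) x = pd 2 (fun x => μ x * F0 x) x)
    (h3 : ∀ x, pd 0 (fun x => μ x * F3 x) x = pd 3 (fun x => μ x * F0 x) x)
    (h21 : ∀ x, pd 1 (fun x => μ x * F2 x) x = pd 2 (fun x => μ x * F1 x) x)
    (h31 : ∀ x, pd 1 (fun x => μ x * F3 x) x = pd 3 (fun x => μ x * F1 x) x)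
    (h32 : ∀ x, pd 2 (fun x => μ x * F3 x) x = pd 3 (fun x => μ x * F2 x) x) :
    ∃ Ψ : (Fin 4 → ℝ) → ℝ, ContDiff ℝ 1 Ψ ∧
      (∀ x, pd 0 Ψ x = μ x * F0 x ∧ pd 1 Ψ x = μ x * F1 x ∧
            pd 2 Ψ x = μ x * F2 x ∧ pd 3 Ψ x = μ x * F3 x) ∧
      ∀ y : ℝ → ℝ, Differentiable ℝ y → Differentiable ℝ (deriv y) →
        Differentiable ℝ (deriv (deriv y)) →
        ∀ s : Set ℝ, s.OrdConnected →
          (∀ t ∈ s, F3 ![t, y t, deriv y t, deriv (deriv y) t] * deriv (deriv (deriv y)) t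
            + F2 ![t, y t, deriv y t, deriv (deriv y) t] * deriv (deriv y) t
            + F1 ![t, y t, deriv y t, deriv (deriv y) t] * deriv y t
            + F0 ![t, y t, deriv y t, deriv (deriv y) t] = 0) →
          ∃ c : ℝ, ∀ t ∈ s, Ψ ![t, y t, deriv y t, deriv (deriv y) t] = c := by
  classical
  set G : Fin 4 → (Fin 4 → ℝ) → ℝ :=
    ![fun x => μ x * F0 x, fun x => μ x * F1 x, fun x => μ x * F2 x, fun x => μ x * F3 x]
    with hGdef
  have hG : ∀ i, ContDiff ℝ 1 (G i) := by
    intro i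
    fin_cases i
    · exact hμ.mul hF0
    · exact hμ.mul hF1
    · exact hμ.mul hF2
    · exact hμ.mul hF3
  have hsym : ∀ i j x, fderiv ℝ (G i) x (Pi.single j 1) = fderiv ℝ (G j) x (Pi.single i 1) := by
    intro i j x
    fin_cases i <;> fin_cases j <;>
      first
        | rfl
        | exact h1 x | exact (h1 x).symm
        | exact h2 x | exact (h2 x).symm
        | exact h3 x | exact (h3 x).symm
        | exact h21 x | exact (h21 x).symm
        | exact h31 x | exact (h31 x).symm
        | exact h32 x | exact (h32 x).symm
  obtain ⟨Ψ, hΨC, hΨd⟩ := poincare G hG hsym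
  have hfd : ∀ x i, pd i Ψ x = G i x := by
    intro x i
    show fderiv ℝ Ψ x (Pi.single i 1) = G i x
    rw [(hΨd x).fderiv]
    simp [Pi.single_apply]
  refine ⟨Ψ, hΨC, fun x => ⟨hfd x 0, hfd x 1, hfd x 2, hfd x 3⟩, ?_⟩
  intro y hy hy' hy'' s hs hsol
  set c : ℝ → (Fin 4 → ℝ) := fun t => ![t, y t, deriv y t, deriv (deriv y) t] with hcdef
  have hc : ∀ t, HasDerivAt c
      ![1, deriv y t, deriv (deriv y) t, deriv (deriv (deriv y)) t] t := by
    intro t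
    rw [hasDerivAt_pi]
    intro i
    fin_cases i
    · simpa [hcdef] using (hasDerivAt_id' t)
    · simpa [hcdef] using (hy t).hasDerivAt
    · simpa [hcdef] using (hy' t).hasDerivAt
    · simpa [hcdef] using (hy'' t).hasDerivAt
  have hh : ∀ t, HasDerivAt (fun t => Ψ (c t))
      ((∑ j, G j (c t) • (ContinuousLinearMap.proj j : (Fin 4 → ℝ) →L[ℝ] ℝ))
        ![1, deriv y t, deriv (deriv y) t, deriv (deriv (deriv y)) t]) t :=
    fun t => (hΨd (c t)).comp_hasDerivAt t (hc t)
  have hzero : ∀ t ∈ s, HasDerivAt (fun t => Ψ (c t)) 0 t := by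
    intro t ht
    have h := hh t
    have hval : (∑ j, G j (c t) • (ContinuousLinearMap.proj j : (Fin 4 → ℝ) →L[ℝ] ℝ))
        ![1, deriv y t, deriv (deriv y) t, deriv (deriv (deriv y)) t] = 0 := by
      have heq := hsol t ht
      simp only [Fin.sum_univ_four, ContinuousLinearMap.add_apply,
        ContinuousLinearMap.smul_apply, ContinuousLinearMap.proj_apply, smul_eq_mul,
        hGdef, hcdef, Matrix.cons_val_zero, Matrix.cons_val_one, Matrix.head_cons,
        Matrix.cons_val_two, Matrix.tail_cons, Matrix.cons_val_three]
      linear_combination (μ ![t, y t, deriv y t, deriv (deriv y) t]) * heq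
    rw [hval] at h
    exact h
  rcases s.eq_empty_or_nonempty with rfl | ⟨t₀, ht₀⟩
  · exact ⟨0, by simp⟩
  refine ⟨Ψ (c t₀), ?_⟩
  have key : ∀ t₁ ∈ s, ∀ t₂ ∈ s, t₁ ≤ t₂ → Ψ (c t₂) = Ψ (c t₁) := by
    intro t₁ h₁ t₂ h₂ hle
    rcases eq_or_lt_of_le hle with rfl | hlt
    · rfl
    have hsub : Icc t₁ t₂ ⊆ s := hs.out h₁ h₂
    have hcst := constant_of_derivWithin_zero (f := fun t => Ψ (c t)) (a := t₁) (b := t₂)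
      (fun x _ => ((hh x).differentiableAt).differentiableWithinAt)
      (fun x hx => by
        have hx' : x ∈ s := hsub ⟨hx.1, hx.2.le⟩
        exact (hzero x hx').hasDerivWithinAt.derivWithin
          (uniqueDiffOn_Icc hlt x (Ico_subset_Icc_self hx)))
    exact hcst t₂ ⟨hle, le_rfl⟩
  intro t ht
  rcases le_total t t₀ with hle | hle
  · exact (key t ht t₀ ht₀ hle).symm
  · exact key t₀ ht₀ t ht hle
end

section
/- Let P_0, P_1, ..., P_n be differentiable and nonvanishing on an interval I. Suppose that P_n'/P_n = P_{n-1}'/P_{n-1} = ... = P_2'/P_2 = (P_1' − P_0)/P_1 on I. Then for every n-times differentiable y : I → ℝ and continuous h, d/dt [ y^{(n-1)} + (P_{n-1}/P_n) y^{(n-2)} + ... + (P_2/P_n) y' + (P_1/P_n) y ] = (1/P_n) [ P_n y^{(n)} + P_{n-1} y^{(n-1)} + ... + P_1 y' + P_0 y ]. In particular μ(t) = 1/P_n(t) is an integrating factor for P_n y^{(n)} + ... + P_1 y' + P_0 y = h(t). -/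
/-- If `Pₙ'/Pₙ = ⋯ = P₂'/P₂ = (P₁' − P₀)/P₁` on an open interval `I`, then
`μ(t) = 1/Pₙ(t)` is an integrating factor for `Pₙ y⁽ⁿ⁾ + ⋯ + P₁ y' + P₀ y = h`:
the product of `1/Pₙ` with the left-hand side is a total derivative. -/
theorem linear_ode_integrating_factor_general (n : ℕ) (hn : 2 ≤ n)
    (I : Set ℝ) (hIo : IsOpen I) (hI : I.OrdConnected)
    (P : ℕ → ℝ → ℝ)
    (hP : ∀ i ≤ n, DifferentiableOn ℝ (P i) I)
    (hPne : ∀ i ≤ n, ∀ t ∈ I, P i t ≠ 0)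
    (hlog : ∀ i ∈ Finset.Icc 2 n, ∀ t ∈ I,
      deriv (P i) t / P i t = deriv (P n) t / P n t)
    (hlog1 : ∀ t ∈ I, (deriv (P 1) t - P 0 t) / P 1 t = deriv (P n) t / P n t)
    (h : ℝ → ℝ) (hh : ContinuousOn h I)
    (y : ℝ → ℝ) (hy : ContDiff ℝ (n : ℕ∞) y) :
    ∀ t ∈ I, HasDerivAt
      (fun s => iteratedDeriv (n - 1) y s
        + ∑ k ∈ Finset.Icc 1 (n - 1), (P k s / P n s) * iteratedDeriv (k - 1) y s)
      ((P n t)⁻¹ * ∑ k ∈ Finset.Icc 0 n, P k t * iteratedDeriv k y t) t := by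
  obtain ⟨m, rfl⟩ : ∃ m, n = m + 2 := ⟨n - 2, by omega⟩
  intro t ht
  have htn : I ∈ nhds t := hIo.mem_nhds ht
  have hPd : ∀ i ≤ m + 2, HasDerivAt (P i) (deriv (P i) t) t := fun i hi =>
    ((hP i hi).differentiableAt htn).hasDerivAt
  have hyd : ∀ k, k ≤ m + 1 → HasDerivAt (iteratedDeriv k y) (iteratedDeriv (k+1) y t) t := by
    intro k hk
    have hd : Differentiable ℝ (iteratedDeriv k y) :=
      hy.differentiable_iteratedDeriv k (by exact_mod_cast Nat.lt_succ_of_le (by omega))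
    have := (hd t).hasDerivAt
    rwa [← iteratedDeriv_succ] at this
  have hPn := hPd (m+2) le_rfl
  have hPnne : P (m+2) t ≠ 0 := hPne (m+2) le_rfl t ht
  set Q : ℕ → ℝ := fun k =>
    (deriv (P k) t * P (m+2) t - P k t * deriv (P (m+2)) t) / (P (m+2) t)^2 with hQ
  have hterm : ∀ k ∈ Finset.Icc 1 (m+1), HasDerivAt
      (fun s => P k s / P (m+2) s * iteratedDeriv (k-1) y s)
      (Q k * iteratedDeriv (k-1) y t + P k t / P (m+2) t * iteratedDeriv k y t) t := by
    intro k hk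
    simp only [Finset.mem_Icc] at hk
    have h1 : HasDerivAt (fun s => P k s / P (m+2) s) (Q k) t :=
      (hPd k (by omega)).div hPn hPnne
    have h2 := hyd (k-1) (by omega)
    have hk1 : k - 1 + 1 = k := by omega
    rw [hk1] at h2
    exact h1.mul h2
  have hsum := HasDerivAt.sum hterm
  have htop := hyd (m+1) le_rfl
  have hadd := htop.add hsum
  convert hadd using 1
  case e'_4 => rfl
  case e'_5 => rfl
  case e'_8 =>
    ext s; rw [Pi.add_apply, Finset.sum_apply, show m + 2 - 1 = m + 1 by omega]
  -- now the algebra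
  have hQ0 : ∀ k ∈ Finset.Icc 2 (m+1), Q k = 0 := by
    intro k hk
    simp only [Finset.mem_Icc] at hk
    have hl := hlog k (Finset.mem_Icc.mpr ⟨hk.1, by omega⟩) t ht
    have hkne := hPne k (by omega) t ht
    rw [div_eq_div_iff hkne hPnne] at hl
    have hz : deriv (P k) t * P (m+2) t - P k t * deriv (P (m+2)) t = 0 := by
      rw [hl]; ring
    simp [hQ, hz]
  have hQ1 : Q 1 = P 0 t / P (m+2) t := by
    have h1 := hlog1 t ht
    have h1ne := hPne 1 (by omega) t ht
    rw [div_eq_div_iff h1ne hPnne] at h1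
    have hnum : deriv (P 1) t * P (m+2) t - P 1 t * deriv (P (m+2)) t
        = P 0 t * P (m+2) t := by nlinarith [h1]
    simp only [hQ]
    rw [hnum, pow_two, mul_div_mul_right _ _ hPnne]
  have hins1 : Finset.Icc 1 (m+1) = insert 1 (Finset.Icc 2 (m+1)) := by
    ext x; simp only [Finset.mem_Icc, Finset.mem_insert]; omega
  have hnotin1 : (1 : ℕ) ∉ Finset.Icc 2 (m+1) := by simp
  have hins0 : Finset.Icc 0 (m+2) = insert 0 (insert (m+2) (Finset.Icc 1 (m+1))) := by
    ext x; simp only [Finset.mem_Icc, Finset.mem_insert]; omega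
  have hnotin0 : (0 : ℕ) ∉ insert (m+2) (Finset.Icc 1 (m+1)) := by simp
  have hnotinn : (m+2 : ℕ) ∉ Finset.Icc 1 (m+1) := by simp
  rw [hins0, Finset.sum_insert hnotin0, Finset.sum_insert hnotinn]
  rw [hins1, Finset.sum_insert hnotin1, Finset.sum_insert hnotin1]
  rw [hQ1]
  have hcong : ∑ k ∈ Finset.Icc 2 (m+1),
      (Q k * iteratedDeriv (k-1) y t + P k t / P (m+2) t * iteratedDeriv k y t)
      = ∑ k ∈ Finset.Icc 2 (m+1), P k t / P (m+2) t * iteratedDeriv k y t := by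
    refine Finset.sum_congr rfl fun k hk => ?_
    rw [hQ0 k hk]; ring
  rw [hcong]
  rw [mul_add, mul_add, mul_add, Finset.mul_sum]
  norm_num
  have hcong2 : ∑ k ∈ Finset.Icc 2 (m+1), (P (m+2) t)⁻¹ * (P k t * iteratedDeriv k y t)
      = ∑ k ∈ Finset.Icc 2 (m+1), P k t / P (m+2) t * iteratedDeriv k y t := by
    refine Finset.sum_congr rfl fun k hk => ?_
    ring
  rw [hcong2]
  field_simp
  ring
end

section
/- Let F0, F1 : ℝ^2 → ℝ be C^1 (coordinates (t,y)), let ξ : ℝ^2 → ℝ be C^1, and let g : ℝ → ℝ be continuous such that ∂F0/∂y − ∂F1/∂t = g(ξ(t,y)) · ( ξ_t F1 − ξ_y F0 ) everywhere. Define μ = exp(G ∘ ξ) where G is an antiderivative of g. Then ∂(μ F0)/∂y = ∂(μ F1)/∂t everywhere, i.e., μ is an integrating factor making the first-order equation F1 y' + F0 = 0 exact. -/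
/-- `n = 1` case of the main theorem: if
`(F0_y − F1_t) = g(ξ)·(ξ_t F1 − ξ_y F0)` with `g` continuous, then
`μ = exp(G ∘ ξ)` (with `G' = g`) is an integrating factor for `F1 y' + F0 = 0`. -/
theorem integrating_factor_first_order
    (F0 F1 : (Fin 2 → ℝ) → ℝ) (hF0 : ContDiff ℝ 1 F0) (hF1 : ContDiff ℝ 1 F1)
    (ξ : (Fin 2 → ℝ) → ℝ) (hξ : ContDiff ℝ 1 ξ)
    (g G : ℝ → ℝ) (hg : Continuous g) (hG : ∀ u, HasDerivAt G (g u) u)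
    (hcond : ∀ x, pd 1 F0 x - pd 0 F1 x
      = g (ξ x) * (pd 0 ξ x * F1 x - pd 1 ξ x * F0 x)) :
    ∀ x, pd 1 (fun x => Real.exp (G (ξ x)) * F0 x) x
       = pd 0 (fun x => Real.exp (G (ξ x)) * F1 x) x := by
  intro x
  have hξd : HasFDerivAt ξ (fderiv ℝ ξ x) x := (hξ.differentiable one_ne_zero x).hasFDerivAt
  have hμ : HasFDerivAt (fun x => Real.exp (G (ξ x)))
      ((Real.exp (G (ξ x)) * g (ξ x)) • fderiv ℝ ξ x) x :=
    ((hG (ξ x)).exp).comp_hasFDerivAt x hξd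
  have key : ∀ (F : (Fin 2 → ℝ) → ℝ), ContDiff ℝ 1 F → ∀ i : Fin 2,
      pd i (fun x => Real.exp (G (ξ x)) * F x) x
        = F x * (Real.exp (G (ξ x)) * g (ξ x) * pd i ξ x)
          + Real.exp (G (ξ x)) * pd i F x := by
    intro F hF i
    have hFd : HasFDerivAt F (fderiv ℝ F x) x := (hF.differentiable one_ne_zero x).hasFDerivAt
    have h : HasFDerivAt (fun x => Real.exp (G (ξ x)) * F x) _ x := hμ.mul hFd
    unfold pd
    rw [h.fderiv]
    simp [smul_eq_mul]
    ring
  rw [key F0 hF0 1, key F1 hF1 0]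
  have h := hcond x
  nlinarith [h, Real.exp_pos (G (ξ x))]
end

section
/- Let F0, F1, F2 : ℝ^3 → ℝ be C^1 (coordinates (t,y,p)), let ξ : ℝ^3 → ℝ be C^1, and let g : ℝ → ℝ be continuous with antiderivative G, and set μ = exp(G ∘ ξ). Suppose that on ℝ^3: (i) ∂F0/∂y − ∂F1/∂t = g(ξ)·(ξ_t F1 − ξ_y F0), (ii) ∂F0/∂p − ∂F2/∂t = g(ξ)·(ξ_t F2 − ξ_p F0), (iii) ∂F1/∂p − ∂F2/∂y = g(ξ)·(ξ_y F2 − ξ_p F1). Then the vector field (μF0, μF1, μF2) has symmetric Jacobian: ∂(μF1)/∂t = ∂(μF0)/∂y, ∂(μF2)/∂t = ∂(μF0)/∂p, ∂(μF2)/∂y = ∂(μF1)/∂p. -/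
lemma pd_mu_mul {m : ℕ} (ξ : (Fin m → ℝ) → ℝ) (hξ : ContDiff ℝ 1 ξ)
    (g G : ℝ → ℝ) (hG : ∀ u, HasDerivAt G (g u) u)
    (f : (Fin m → ℝ) → ℝ) (hf : ContDiff ℝ 1 f) (i : Fin m) (x : Fin m → ℝ) :
    pd i (fun y => Real.exp (G (ξ y)) * f y) x
      = Real.exp (G (ξ x)) * (g (ξ x) * pd i ξ x * f x + pd i f x) := by
  have hξd : HasFDerivAt ξ (fderiv ℝ ξ x) x := (hξ.differentiable one_ne_zero x).hasFDerivAt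
  have hGξ : HasFDerivAt (fun y => G (ξ y)) (g (ξ x) • fderiv ℝ ξ x) x :=
    (hG (ξ x)).comp_hasFDerivAt x hξd
  have hexp : HasFDerivAt (fun y => Real.exp (G (ξ y)))
      (Real.exp (G (ξ x)) • (g (ξ x) • fderiv ℝ ξ x)) x :=
    hGξ.exp
  have hfd : HasFDerivAt f (fderiv ℝ f x) x := (hf.differentiable one_ne_zero x).hasFDerivAt
  have hmul := hexp.mul hfd
  unfold pd
  rw [show (fun y => Real.exp (G (ξ y)) * f y) = (fun y => Real.exp (G (ξ y))) * f from rfl, hmul.fderiv]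
  simp
  ring

/-- `n = 2` case of the main theorem (coordinates `(t, y, p)`): if the three
quotients are the same function `g` of `ξ`, then `μ = exp(G ∘ ξ)` makes the
vector field `(μF0, μF1, μF2)` have symmetric Jacobian. -/
theorem integrating_factor_second_order
    (F0 F1 F2 : (Fin 3 → ℝ) → ℝ)
    (hF0 : ContDiff ℝ 1 F0) (hF1 : ContDiff ℝ 1 F1) (hF2 : ContDiff ℝ 1 F2)
    (ξ : (Fin 3 → ℝ) → ℝ) (hξ : ContDiff ℝ 1 ξ)
    (g G : ℝ → ℝ) (hg : Continuous g) (hG : ∀ u, HasDerivAt G (g u) u)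
    (h1 : ∀ x, pd 1 F0 x - pd 0 F1 x
      = g (ξ x) * (pd 0 ξ x * F1 x - pd 1 ξ x * F0 x))
    (h2 : ∀ x, pd 2 F0 x - pd 0 F2 x
      = g (ξ x) * (pd 0 ξ x * F2 x - pd 2 ξ x * F0 x))
    (h3 : ∀ x, pd 2 F1 x - pd 1 F2 x
      = g (ξ x) * (pd 1 ξ x * F2 x - pd 2 ξ x * F1 x)) :
    (∀ x, pd 0 (fun x => Real.exp (G (ξ x)) * F1 x) x
        = pd 1 (fun x => Real.exp (G (ξ x)) * F0 x) x) ∧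
    (∀ x, pd 0 (fun x => Real.exp (G (ξ x)) * F2 x) x
        = pd 2 (fun x => Real.exp (G (ξ x)) * F0 x) x) ∧
    (∀ x, pd 1 (fun x => Real.exp (G (ξ x)) * F2 x) x
        = pd 2 (fun x => Real.exp (G (ξ x)) * F1 x) x) := by
  refine ⟨fun x => ?_, fun x => ?_, fun x => ?_⟩
  · rw [pd_mu_mul ξ hξ g G hG F1 hF1, pd_mu_mul ξ hξ g G hG F0 hF0]
    linear_combination (-(Real.exp (G (ξ x)))) * h1 x
  · rw [pd_mu_mul ξ hξ g G hG F2 hF2, pd_mu_mul ξ hξ g G hG F0 hF0]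
    linear_combination (-(Real.exp (G (ξ x)))) * h2 x
  · rw [pd_mu_mul ξ hξ g G hG F2 hF2, pd_mu_mul ξ hξ g G hG F1 hF1]
    linear_combination (-(Real.exp (G (ξ x)))) * h3 x
end

section
/- Let F0, ..., Fn : ℝ^{n+1} → ℝ be C^1 (coordinates (t, x_0, ..., x_{n-1})), ξ : ℝ^{n+1} → ℝ be C^1, g : ℝ → ℝ continuous with antiderivative G, and μ = exp(G ∘ ξ). Assume for all 1 ≤ i ≤ n: ∂F0/∂x_{i-1} − ∂F_i/∂t = g(ξ)·(ξ_t F_i − ξ_{x_{i-1}} F_0), and for all 2 ≤ i ≤ n, 1 ≤ j ≤ i−1: ∂F_j/∂x_{i-1} − ∂F_i/∂x_{j-1} = g(ξ)·(ξ_{x_{j-1}} F_i − ξ_{x_{i-1}} F_j). Then μF_0, ..., μF_n satisfy the exactness conditions: ∂(μF_i)/∂t = ∂(μF_0)/∂x_{i-1} for all 1 ≤ i ≤ n, and ∂(μF_i)/∂x_{j-1} = ∂(μF_j)/∂x_{i-1} for all 2 ≤ i ≤ n, 1 ≤ j ≤ i−1. -/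
/-- Main theorem (Theorem 2 of the paper) in full generality: under the
proportionality conditions with a continuous function `g` of `ξ`,
`μ = exp(G ∘ ξ)` turns `(F_0, …, F_n)` into a family `(μF_0, …, μF_n)`
The product rule computation for `pd` of `exp(G∘ξ) * f`. -/
theorem pd_exp_mul {m : ℕ} (k : Fin m) (f ξ : (Fin m → ℝ) → ℝ)
    (hf : ContDiff ℝ 1 f) (hξ : ContDiff ℝ 1 ξ)
    (g G : ℝ → ℝ) (hG : ∀ u, HasDerivAt G (g u) u) (x : Fin m → ℝ) :
    pd k (fun x => Real.exp (G (ξ x)) * f x) x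
      = Real.exp (G (ξ x)) * (g (ξ x) * pd k ξ x * f x + pd k f x) := by
  have hξd : HasFDerivAt ξ (fderiv ℝ ξ x) x :=
    (hξ.differentiable one_ne_zero x).hasFDerivAt
  have hfd : HasFDerivAt f (fderiv ℝ f x) x :=
    (hf.differentiable one_ne_zero x).hasFDerivAt
  have hGd : HasFDerivAt (fun x => G (ξ x))
      (g (ξ x) • fderiv ℝ ξ x) x := (hG (ξ x)).comp_hasFDerivAt x hξd
  have hexp : HasFDerivAt (fun x => Real.exp (G (ξ x)))
      (Real.exp (G (ξ x)) • (g (ξ x) • fderiv ℝ ξ x)) x :=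
    hGd.exp
  have hmul : HasFDerivAt (fun x => Real.exp (G (ξ x)) * f x) (Real.exp (G (ξ x)) • fderiv ℝ f x + f x • (Real.exp (G (ξ x)) • g (ξ x) • fderiv ℝ ξ x)) x := hexp.mul hfd
  unfold pd
  rw [hmul.fderiv]
  simp [ContinuousLinearMap.smul_apply]
  ring

/-- Main theorem (Theorem 2 of the paper) in full generality: under the
proportionality conditions with a continuous function `g` of `ξ`,
`μ = exp(G ∘ ξ)` turns `(F_0, …, F_n)` into a family `(μF_0, …, μF_n)`
satisfying all exactness conditions.  Coordinates: index `0` is `t` and index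
`i ≥ 1` is `x_{i-1} = y^{(i-1)}`. -/
theorem integrating_factor_nth_order (n : ℕ)
    (F : Fin (n + 1) → (Fin (n + 1) → ℝ) → ℝ)
    (hF : ∀ i, ContDiff ℝ 1 (F i))
    (ξ : (Fin (n + 1) → ℝ) → ℝ) (hξ : ContDiff ℝ 1 ξ)
    (g G : ℝ → ℝ) (hg : Continuous g) (hG : ∀ u, HasDerivAt G (g u) u)
    (hcond0 : ∀ i : Fin (n + 1), i ≠ 0 → ∀ x,
      pd i (F 0) x - pd 0 (F i) x
        = g (ξ x) * (pd 0 ξ x * F i x - pd i ξ x * F 0 x))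
    (hcond : ∀ i j : Fin (n + 1), j ≠ 0 → j < i → ∀ x,
      pd i (F j) x - pd j (F i) x
        = g (ξ x) * (pd j ξ x * F i x - pd i ξ x * F j x)) :
    (∀ i : Fin (n + 1), i ≠ 0 → ∀ x,
      pd 0 (fun x => Real.exp (G (ξ x)) * F i x) x
        = pd i (fun x => Real.exp (G (ξ x)) * F 0 x) x) ∧
    (∀ i j : Fin (n + 1), j ≠ 0 → j < i → ∀ x,
      pd j (fun x => Real.exp (G (ξ x)) * F i x) x
        = pd i (fun x => Real.exp (G (ξ x)) * F j x) x) := by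
  constructor
  · intro i hi x
    rw [pd_exp_mul 0 (F i) ξ (hF i) hξ g G hG x,
        pd_exp_mul i (F 0) ξ (hF 0) hξ g G hG x]
    linear_combination -Real.exp (G (ξ x)) * hcond0 i hi x
  · intro i j hj hji x
    rw [pd_exp_mul j (F i) ξ (hF i) hξ g G hG x,
        pd_exp_mul i (F j) ξ (hF j) hξ g G hG x]
    linear_combination -Real.exp (G (ξ x)) * hcond i j hj hji x
end

section
/- Let F0, ..., Fn : ℝ^{n+1} → ℝ be C^1 (coordinates (t, x_0, ..., x_{n-1})), α : ℝ → ℝ differentiable, g : ℝ → ℝ continuous with antiderivative G, and μ(t) = exp(G(α(t))). Assume: (i) ∂F_j/∂x_{i-1} = ∂F_i/∂x_{j-1} for all 2 ≤ i ≤ n, 1 ≤ j ≤ i−1; (ii) for each 1 ≤ i ≤ n, ∂F0/∂x_{i-1} − ∂F_i/∂t = g(α(t))·α'(t)·F_i. Then ∂(μF_i)/∂t = ∂(μF_0)/∂x_{i-1} for all 1 ≤ i ≤ n and ∂(μF_i)/∂x_{j-1} = ∂(μF_j)/∂x_{i-1} for all 2 ≤ i ≤ n, 1 ≤ j ≤ i−1;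 i.e., μ(t) is an integrating factor depending only on t. -/
/-- Corollary 1 of the paper: the special case `ξ = α(t)`, giving an integrating
factor `μ(t) = exp(G(α(t)))` depending only on `t`.  Coordinates: index `0` is
`t`, index `i ≥ 1` is `x_{i-1}`. -/
theorem integrating_factor_in_t (n : ℕ)
    (F : Fin (n + 1) → (Fin (n + 1) → ℝ) → ℝ)
    (hF : ∀ i, ContDiff ℝ 1 (F i))
    (α : ℝ → ℝ) (hα : Differentiable ℝ α)
    (g G : ℝ → ℝ) (hg : Continuous g) (hG : ∀ u, HasDerivAt G (g u) u)
    (hsym : ∀ i j : Fin (n + 1), j ≠ 0 → j < i → ∀ x,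
      pd i (F j) x = pd j (F i) x)
    (hcond : ∀ i : Fin (n + 1), i ≠ 0 → ∀ x,
      pd i (F 0) x - pd 0 (F i) x = g (α (x 0)) * deriv α (x 0) * F i x) :
    (∀ i : Fin (n + 1), i ≠ 0 → ∀ x,
      pd 0 (fun x => Real.exp (G (α (x 0))) * F i x) x
        = pd i (fun x => Real.exp (G (α (x 0))) * F 0 x) x) ∧
    (∀ i j : Fin (n + 1), j ≠ 0 → j < i → ∀ x,
      pd j (fun x => Real.exp (G (α (x 0))) * F i x) x
        = pd i (fun x => Real.exp (G (α (x 0))) * F j x) x) := by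
  set μ : (Fin (n + 1) → ℝ) → ℝ := fun x => Real.exp (G (α (x 0))) with hμdef
  have hφ : ∀ t : ℝ, HasDerivAt (fun u => Real.exp (G (α u)))
      (Real.exp (G (α t)) * (g (α t) * deriv α t)) t := fun t =>
    ((hG (α t)).comp t (hα t).hasDerivAt).exp
  have hμfd : ∀ x, HasFDerivAt μ
      ((Real.exp (G (α (x 0))) * (g (α (x 0)) * deriv α (x 0))) •
        (ContinuousLinearMap.proj (R := ℝ) (φ := fun _ : Fin (n + 1) => ℝ) 0)) x := by
    intro x
    have hp : HasFDerivAt (fun x : Fin (n + 1) → ℝ => x 0)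
        (ContinuousLinearMap.proj (R := ℝ) (φ := fun _ : Fin (n + 1) => ℝ) 0) x :=
      (ContinuousLinearMap.proj (R := ℝ) (φ := fun _ : Fin (n + 1) => ℝ) 0).hasFDerivAt
    exact (hφ (x 0)).comp_hasFDerivAt x hp
  have hμd : Differentiable ℝ μ := fun x => (hμfd x).differentiableAt
  have hpdμ : ∀ (k : Fin (n + 1)) x, pd k μ x =
      (if k = 0 then Real.exp (G (α (x 0))) * (g (α (x 0)) * deriv α (x 0)) else 0) := by
    intro k x
    rw [pd, (hμfd x).fderiv]
    simp only [ContinuousLinearMap.smul_apply, ContinuousLinearMap.proj_apply,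
      smul_eq_mul, Pi.single_apply]
    rcases eq_or_ne k 0 with h | h
    · simp [h]
    · simp [h, Ne.symm h]
  have hFd : ∀ i, Differentiable ℝ (F i) := fun i => (hF i).differentiable one_ne_zero
  have hpd_mul : ∀ (i k : Fin (n + 1)) x,
      pd k (fun x => μ x * F i x) x = pd k μ x * F i x + μ x * pd k (F i) x := by
    intro i k x
    rw [pd, fderiv_fun_mul (hμd x) (hFd i x)]
    simp only [ContinuousLinearMap.add_apply, ContinuousLinearMap.smul_apply, smul_eq_mul]
    show μ x * pd k (F i) x + F i x * pd k μ x = _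
    ring
  constructor
  · intro i hi x
    have h1 := hpd_mul i 0 x
    have h2 := hpd_mul 0 i x
    have h3 := hpdμ 0 x
    have h4 := hpdμ i x
    have h5 := hcond i hi x
    simp only [if_pos rfl, if_neg hi] at h3 h4
    show pd 0 (fun x => μ x * F i x) x = pd i (fun x => μ x * F 0 x) x
    rw [h1, h2, h3, h4]
    have : pd i (F 0) x = g (α (x 0)) * deriv α (x 0) * F i x + pd 0 (F i) x := by
      linarith
    rw [this]
    show Real.exp (G (α (x 0))) * (g (α (x 0)) * deriv α (x 0)) * F i x +
        μ x * pd 0 (F i) x = _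
    rw [hμdef]
    ring
  · intro i j hj hji x
    have hi : i ≠ 0 := by
      intro h; subst h; exact absurd hji (by simp [Fin.pos_iff_ne_zero.mpr hj, Fin.not_lt.mpr (Fin.zero_le j)])
    have h1 := hpd_mul i j x
    have h2 := hpd_mul j i x
    have h3 := hpdμ j x
    have h4 := hpdμ i x
    simp only [if_neg hj, if_neg hi] at h3 h4
    show pd j (fun x => μ x * F i x) x = pd i (fun x => μ x * F j x) x
    rw [h1, h2, h3, h4, hsym i j hj hji x]
    ring
end
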